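/- Let V be a real vector space of dimension n equipped with a complete flag {0} = V₀ ⊂ V₁ ⊂ ⋯ ⊂ V_n = V of subspaces (dim V_k = k), and let γ be a nondegenerate symmetric bilinear form on V. Then there exists an ordered basis (v₁,…,v_n) of V and a partition S of the index set {1,…,n} into subsets of cardinality 1 or 2 such that: (i) V_k = span{v₁,…,v_k} for all 1 ≤ k ≤ n; (ii) γ(v_i,v_j) = 0 whenever i and j belong to different subsets of S; (iii) γ(v_i,v_i) = ±1 for every i with {i} ∈ S; (iv) γ(v_i,v_i) = γ(v_j,v_j) = 0 and γ(v_i,v_j) = 1 for every pair i ≠ j with {i,j} ∈ S. -/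

import Mathlib

/-!
The basis is built one vector at a time along the flag, keeping a family whose Gram matrix is
block diagonal with blocks `(±1)`, hyperbolic planes and `(0)`; the `(0)` blocks are isotropic
vectors orthogonal to the whole family so far. A new vector is first made orthogonal to the
nondegenerate blocks. If it is then orthogonal to everything, it is rescaled to norm `±1` or `0`.
Otherwise it becomes the hyperbolic partner of the earliest isotropic vector it pairs with, and
the later isotropic vectors are corrected by multiples of that one, which does not move the flag.
At the end nondegeneracy leaves no `(0)` blocks.
-/

open Module Submodule Set

section Flag

variable (K : Type*) {V : Type*} [Field K] [AddCommGroup V] [Module K V]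

def flagSpan {k : ℕ} (v : Fin k → V) (m : ℕ) : Submodule K V :=
  span K (v '' {i | (i : ℕ) < m})

variable {K} {k m : ℕ}

theorem mem_flagSpan (v : Fin k → V) {i : Fin k} (hi : (i : ℕ) < m) : v i ∈ flagSpan K v m :=
  subset_span (mem_image_of_mem v hi)

theorem flagSpan_le_iff {v : Fin k → V} {p : Submodule K V} :
    flagSpan K v m ≤ p ↔ ∀ i : Fin k, (i : ℕ) < m → v i ∈ p :=
  span_le.trans forall_mem_image

theorem flagSpan_of_le (v : Fin k → V) (hm : k ≤ m) : flagSpan K v m = span K (range v) := by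
  rw [flagSpan, ← image_univ]
  congr 2
  exact eq_univ_of_forall fun i => lt_of_lt_of_le i.isLt hm

theorem flagSpan_snoc_of_le (v : Fin k → V) (x : V) (hm : m ≤ k) :
    flagSpan K (Fin.snoc v x : Fin (k + 1) → V) m = flagSpan K v m := by
  have hset : {i : Fin (k + 1) | (i : ℕ) < m} = Fin.castSucc '' {i : Fin k | (i : ℕ) < m} := by
    ext i
    refine ⟨fun hi => ⟨⟨i, lt_of_lt_of_le hi hm⟩, hi, rfl⟩, ?_⟩
    rintro ⟨j, hj, rfl⟩
    exact hj
  rw [flagSpan, hset, image_image]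
  simp only [Fin.snoc_castSucc]
  rfl

theorem flagSpan_snoc_of_lt (v : Fin k → V) (x : V) (hm : k < m) :
    flagSpan K (Fin.snoc v x : Fin (k + 1) → V) m = flagSpan K v k ⊔ K ∙ x := by
  rw [flagSpan_of_le _ hm, flagSpan_of_le v le_rfl, Fin.range_snoc, span_insert, sup_comm]

theorem sup_span_singleton_eq_of_sub_smul_mem {p : Submodule K V} {x y : V} {c : K}
    (hc : c ≠ 0) (h : y - c • x ∈ p) : p ⊔ K ∙ y = p ⊔ K ∙ x := by
  have key : ∀ {x y : V} {c : K}, y - c • x ∈ p → p ⊔ K ∙ y ≤ p ⊔ K ∙ x := fun {x y c} h =>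
    sup_le le_sup_left <| (span_singleton_le_iff_mem _ _).2 <| by
      simpa using add_mem (mem_sup_left h)
        (mem_sup_right (smul_mem _ c (mem_span_singleton_self x)))
  refine le_antisymm (key h) (key (c := c⁻¹) ?_)
  convert p.smul_mem (-c⁻¹) h using 1
  rw [smul_sub, smul_smul, neg_mul, inv_mul_cancel₀ hc]
  module

theorem flagSpan_snoc_eq_of_sub_smul_mem {u v : Fin k → V}
    (huv : ∀ m, flagSpan K u m = flagSpan K v m) {x y : V} {c : K} (hc : c ≠ 0)
    (h : y - c • x ∈ flagSpan K v k) (m : ℕ) :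
    flagSpan K (Fin.snoc u y : Fin (k + 1) → V) m = flagSpan K (Fin.snoc v x) m := by
  rcases le_or_gt m k with hm | hm
  · rw [flagSpan_snoc_of_le _ _ hm, flagSpan_snoc_of_le _ _ hm, huv]
  · rw [flagSpan_snoc_of_lt _ _ hm, flagSpan_snoc_of_lt _ _ hm, huv,
      sup_span_singleton_eq_of_sub_smul_mem hc h]

theorem flagSpan_sub_smul_le (v : Fin k → V) {i₀ : Fin k} {e : Fin k → K}
    (he : ∀ j ≤ i₀, e j = 0) (m : ℕ) :
    flagSpan K (fun j => v j - e j • v i₀) m ≤ flagSpan K v m := by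
  refine flagSpan_le_iff.2 fun j hj => ?_
  rcases le_or_gt j i₀ with hji | hij
  · simpa [he j hji] using mem_flagSpan v hj
  · exact sub_mem (mem_flagSpan v hj) (smul_mem _ _ (mem_flagSpan v (lt_trans hij hj)))

theorem flagSpan_sub_smul_eq (v : Fin k → V) {i₀ : Fin k} {e : Fin k → K}
    (he : ∀ j ≤ i₀, e j = 0) (m : ℕ) :
    flagSpan K (fun j => v j - e j • v i₀) m = flagSpan K v m := by
  refine le_antisymm (flagSpan_sub_smul_le v he m) ?_
  convert flagSpan_sub_smul_le (fun j => v j - e j • v i₀) (i₀ := i₀) (e := -e)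
    (fun j hj => by simp [he j hj]) m using 3 with j
  simp [he i₀ le_rfl]

theorem exists_sup_span_singleton_eq [FiniteDimensional K V] {p q : Submodule K V} (hpq : p ≤ q)
    (h : finrank K q = finrank K p + 1) : ∃ x, p ⊔ K ∙ x = q := by
  obtain ⟨x, hxq, hxp⟩ := SetLike.exists_of_lt (lt_of_le_of_ne hpq (by rintro rfl; omega))
  refine ⟨x, eq_of_le_of_finrank_le (sup_le hpq ((span_singleton_le_iff_mem _ _).2 hxq)) ?_⟩
  have := finrank_lt_finrank_of_lt (left_lt_sup.2 (mt (span_singleton_le_iff_mem x p).1 hxp))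
  omega

theorem exists_flagSpan_eq [FiniteDimensional K V] (n : ℕ) (W : ℕ → Submodule K V)
    (hW0 : W 0 = ⊥) (hmono : ∀ k l, k ≤ l → l ≤ n → W k ≤ W l)
    (hdim : ∀ k ≤ n, finrank K (W k) = k) :
    ∃ w : Fin n → V, ∀ m ≤ n, flagSpan K w m = W m := by
  induction n with
  | zero =>
    refine ⟨Fin.elim0, fun m hm => ?_⟩
    obtain rfl : m = 0 := by omega
    simp [flagSpan, hW0]
  | succ n ih =>
    obtain ⟨w, hw⟩ := ih (fun k l hkl hl => hmono k l hkl (by omega))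
      (fun k hk => hdim k (by omega))
    obtain ⟨x, hx⟩ := exists_sup_span_singleton_eq (hmono n (n + 1) n.le_succ le_rfl)
      (by rw [hdim n (by omega), hdim (n + 1) le_rfl])
    refine ⟨Fin.snoc w x, fun m hm => ?_⟩
    rcases hm.lt_or_eq with hm | rfl
    · rw [flagSpan_snoc_of_le _ _ (by omega), hw m (by omega)]
    · rw [flagSpan_snoc_of_lt _ _ n.lt_succ_self, hw n le_rfl, hx]

end Flag

section Witt

variable {V : Type*} [AddCommGroup V] [Module ℝ V] (γ : LinearMap.BilinForm ℝ V)

/-- The blocks are the orbits `{i, σ i}` of `σ`. A fixed point `i` with `γ (v i) (v i) = 0` is an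
isotropic vector orthogonal to the whole family, still waiting for a hyperbolic partner. -/
structure IsWittFamily {k : ℕ} (v : Fin k → V) (σ : Fin k → Fin k) : Prop where
  involutive : Function.Involutive σ
  apply_eq_zero : ∀ i j, j ≠ i → j ≠ σ i → γ (v i) (v j) = 0
  apply_self_of_fixed : ∀ i, σ i = i → ∃ s : SignType, γ (v i) (v i) = s
  apply_self_of_ne : ∀ i, σ i ≠ i → γ (v i) (v i) = 0
  apply_partner : ∀ i, σ i ≠ i → γ (v i) (v (σ i)) = 1

theorem exists_smul_apply_self_eq_sign (y : V) :
    ∃ s : ℝ, s ≠ 0 ∧ γ (s • y) (s • y) = SignType.sign (γ y y) := by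
  by_cases h : γ y y = 0
  · exact ⟨1, one_ne_zero, by simp [h]⟩
  have habs : 0 < |γ y y| := abs_pos.2 h
  refine ⟨(√|γ y y|)⁻¹, by positivity, ?_⟩
  have hsq : ((√|γ y y|)⁻¹) ^ 2 = |γ y y|⁻¹ := by rw [inv_pow, Real.sq_sqrt habs.le]
  calc γ ((√|γ y y|)⁻¹ • y) ((√|γ y y|)⁻¹ • y) = ((√|γ y y|)⁻¹) ^ 2 * γ y y := by
        simp only [map_smul, LinearMap.smul_apply, smul_eq_mul]; ring
    _ = SignType.sign (γ y y) := by
      rw [hsq]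
      nth_rewrite 2 [← sign_mul_abs (γ y y)]
      field_simp

variable {γ}

theorem exists_isotropic_add_smul (hγ : γ.IsSymm) {e y : V} (he : γ e e = 0)
    (hy : γ y e = 1) :
    ∃ t : ℝ, γ (y + t • e) (y + t • e) = 0 :=
  ⟨-(γ y y / 2), by simp [hγ.eq e y, he, hy]; ring⟩

namespace IsWittFamily

variable {k : ℕ} {v : Fin k → V} {σ : Fin k → Fin k}

theorem apply_eq_zero_of_isotropic (hv : IsWittFamily γ v σ) {i : Fin k} (hi : σ i = i)
    (h0 : γ (v i) (v i) = 0) (j : Fin k) : γ (v i) (v j) = 0 := by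
  rcases eq_or_ne j i with rfl | hj
  · exact h0
  · exact hv.apply_eq_zero i j hj (by rwa [hi])

theorem sq_apply_partner_eq_one (hv : IsWittFamily γ v σ) {j : Fin k}
    (hj : σ j = j → γ (v j) (v j) ≠ 0) : γ (v j) (v (σ j)) ^ 2 = 1 := by
  by_cases h : σ j = j
  · obtain ⟨s, hs⟩ := hv.apply_self_of_fixed j h
    rw [h, hs]
    rw [hs] at hj
    cases s <;> simp_all
  · rw [hv.apply_partner j h, one_pow]

theorem sum_mul_apply (hγ : γ.IsSymm) (hv : IsWittFamily γ v σ) (x : V) (j : Fin k) :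
    ∑ i, γ x (v (σ i)) * γ (v i) (v (σ i)) * γ (v i) (v j) =
      γ (v j) (v (σ j)) ^ 2 * γ x (v j) := by
  by_cases h : σ j = j
  · rw [Finset.sum_eq_single j (fun i _ hij => ?_) (by simp), h]
    · ring
    · rw [hv.apply_eq_zero i j (Ne.symm hij) (fun hji => hij (by rw [← hv.involutive i, ← hji, h])),
        mul_zero]
  · rw [Finset.sum_eq_single (σ j) (fun i _ hi => ?_) (by simp), hv.involutive j,
      hγ.eq (v (σ j)) (v j), hv.apply_partner j h]
    · ring
    · rcases eq_or_ne i j with rfl | hij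
      · rw [hv.apply_self_of_ne i h, mul_zero]
      · rw [hv.apply_eq_zero i j (Ne.symm hij) (fun hji => hi (by rw [hji, hv.involutive])),
          mul_zero]

theorem exists_sub_mem_flagSpan_orthogonal (hγ : γ.IsSymm) (hv : IsWittFamily γ v σ) (x : V) :
    ∃ y, y - x ∈ flagSpan ℝ v k ∧ ∀ j, (σ j = j → γ (v j) (v j) ≠ 0) → γ y (v j) = 0 := by
  -- `γ (v i) (v (σ i)) ∈ {0, 1, -1}` is its own inverse, so this removes the component of `x`
  -- along every nondegenerate block.
  refine ⟨x - ∑ i, (γ x (v (σ i)) * γ (v i) (v (σ i))) • v i, ?_, fun j hj => ?_⟩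
  · rw [sub_sub_cancel_left]
    exact neg_mem (sum_mem fun i _ => smul_mem _ _ (mem_flagSpan v i.isLt))
  · simp only [map_sub, map_sum, map_smul, LinearMap.sub_apply, LinearMap.sum_apply,
      LinearMap.smul_apply, smul_eq_mul]
    rw [hv.sum_mul_apply hγ, hv.sq_apply_partner_eq_one hj, one_mul, sub_self]

theorem snoc_of_orthogonal (hγ : γ.IsSymm) (hv : IsWittFamily γ v σ) {z : V}
    (hz : ∀ j, γ z (v j) = 0) (hzz : ∃ s : SignType, γ z z = s) :
    IsWittFamily γ (Fin.snoc v z : Fin (k + 1) → V) (Fin.snoc (Fin.castSucc ∘ σ) (Fin.last k)) where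
  involutive i := by
    induction i using Fin.lastCases <;> simp [hv.involutive _]
  apply_eq_zero i j := by
    induction i using Fin.lastCases with
    | last =>
      induction j using Fin.lastCases with
      | last => simp
      | cast j => simpa using hz j
    | cast i =>
      induction j using Fin.lastCases with
      | last => simpa [hγ.eq (v i)] using fun _ _ => hz i
      | cast j => simpa using hv.apply_eq_zero i j
  apply_self_of_fixed i := by
    induction i using Fin.lastCases with
    | last => simpa using hzz
    | cast i => simpa using hv.apply_self_of_fixed i
  apply_self_of_ne i := by
    induction i using Fin.lastCases with
    | last => simp
    | cast i => simpa using hv.apply_self_of_ne i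
  apply_partner i := by
    induction i using Fin.lastCases with
    | last => simp
    | cast i => simpa using hv.apply_partner i

theorem snoc_hyperbolic (hγ : γ.IsSymm) (hv : IsWittFamily γ v σ) {i₀ : Fin k} (hi₀ : σ i₀ = i₀)
    (h0 : γ (v i₀) (v i₀) = 0) {z : V} (hzz : γ z z = 0) (hz : γ z (v i₀) = 1)
    {e : Fin k → ℝ} (he₀ : e i₀ = 0) (he : ∀ j ≠ i₀, e j = γ z (v j)) :
    IsWittFamily γ (Fin.snoc (fun j => v j - e j • v i₀) z : Fin (k + 1) → V)
      (Fin.snoc (Function.update (Fin.castSucc ∘ σ) i₀ (Fin.last k)) i₀.castSucc) := by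
  set u : Fin k → V := fun j => v j - e j • v i₀
  have hrad := hv.apply_eq_zero_of_isotropic hi₀ h0
  have hu : ∀ j j', γ (u j) (u j') = γ (v j) (v j') := fun j j' => by
    simp [u, hrad, hγ.eq _ (v i₀)]
  have hui₀ : u i₀ = v i₀ := by simp [u, he₀]
  have hzu : ∀ j ≠ i₀, γ z (u j) = 0 := fun j hj => by simp [u, he j hj, hz]
  have hσ : ∀ j ≠ i₀, σ j ≠ i₀ := fun j hj h => hj (by rw [← hv.involutive j, h, hi₀])
  refine ⟨fun i => ?_, fun i j => ?_, fun i => ?_, fun i => ?_, fun i => ?_⟩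
  · induction i using Fin.lastCases with
    | last => simp
    | cast i =>
      rcases eq_or_ne i i₀ with rfl | hi
      · simp
      · simp [hi, hσ i hi, hv.involutive i]
  · induction i using Fin.lastCases with
    | last =>
      induction j using Fin.lastCases with
      | last => simp
      | cast j => simpa using hzu j
    | cast i =>
      rcases eq_or_ne i i₀ with rfl | hi
      · induction j using Fin.lastCases with
        | last => simp
        | cast j => simpa [hu] using fun _ => hrad j
      · induction j using Fin.lastCases with
        | last => simpa [hγ.eq (u i)] using fun _ _ => hzu i hi
        | cast j => simpa [hu, hi] using hv.apply_eq_zero i j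
  · induction i using Fin.lastCases with
    | last => simp
    | cast i =>
      rcases eq_or_ne i i₀ with rfl | hi
      · simp [(Fin.castSucc_lt_last i).ne']
      · simpa [hu, hi] using hv.apply_self_of_fixed i
  · induction i using Fin.lastCases with
    | last => simpa using hzz
    | cast i =>
      rcases eq_or_ne i i₀ with rfl | hi
      · simpa [hu, (Fin.castSucc_lt_last i).ne'] using h0
      · simpa [hu, hi] using hv.apply_self_of_ne i
  · induction i using Fin.lastCases with
    | last => simpa [hui₀] using hz
    | cast i =>
      rcases eq_or_ne i i₀ with rfl | hi
      · simpa [hui₀, hγ.eq (v i), (Fin.castSucc_lt_last i).ne'] using hz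
      · simpa [hu, hi] using hv.apply_partner i

theorem exists_snoc (hγ : γ.IsSymm) (hv : IsWittFamily γ v σ) (x : V) :
    ∃ (u : Fin (k + 1) → V) (τ : Fin (k + 1) → Fin (k + 1)),
      IsWittFamily γ u τ ∧ ∀ m, flagSpan ℝ u m = flagSpan ℝ (Fin.snoc v x) m := by
  obtain ⟨y, hyx, hy⟩ := hv.exists_sub_mem_flagSpan_orthogonal hγ x
  by_cases hrad : ∀ j, γ y (v j) = 0
  · obtain ⟨s, hs, hss⟩ := exists_smul_apply_self_eq_sign γ y
    refine ⟨_, _, hv.snoc_of_orthogonal hγ (z := s • y) (fun j => by simp [hrad j]) ⟨_, hss⟩,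
      flagSpan_snoc_eq_of_sub_smul_mem (fun _ => rfl) hs ?_⟩
    rw [← smul_sub]
    exact smul_mem _ _ hyx
  push Not at hrad
  obtain ⟨i₀, hi₀, hmin⟩ := exists_minimal_of_wellFoundedLT _ hrad
  have hbefore : ∀ j < i₀, γ y (v j) = 0 := fun j hj => by
    by_contra h
    exact hj.not_ge (hmin h hj.le)
  obtain ⟨hfix, h0⟩ : σ i₀ = i₀ ∧ γ (v i₀) (v i₀) = 0 := by
    by_contra h
    exact hi₀ (hy i₀ fun h1 h2 => h ⟨h1, h2⟩)
  have hrad₀ := hv.apply_eq_zero_of_isotropic hfix h0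
  set c := γ y (v i₀)
  obtain ⟨t, ht⟩ := exists_isotropic_add_smul hγ h0 (y := c⁻¹ • y)
    (by simp [c, inv_mul_cancel₀ hi₀])
  set z := c⁻¹ • y + t • v i₀
  have hzv : ∀ j, γ z (v j) = c⁻¹ * γ y (v j) := fun j => by simp [z, hrad₀ j]
  refine ⟨_, _, hv.snoc_hyperbolic hγ hfix h0 ht
    (e := Function.update (fun j => γ z (v j)) i₀ 0) (by simp [hzv, c, inv_mul_cancel₀ hi₀])
    (by simp) (fun j hj => by simp [hj]),
    flagSpan_snoc_eq_of_sub_smul_mem (flagSpan_sub_smul_eq v fun j hj => ?_)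
      (inv_ne_zero hi₀) ?_⟩
  · rcases hj.lt_or_eq with hj | rfl
    · simp [hj.ne, hzv, hbefore j hj]
    · simp
  · have : z - c⁻¹ • x = c⁻¹ • (y - x) + t • v i₀ := by simp only [z]; module
    rw [this]
    exact add_mem (smul_mem _ _ hyx) (smul_mem _ _ (mem_flagSpan v i₀.isLt))

theorem apply_self_eq_one_or_neg_one (hv : IsWittFamily γ v σ) (hnd : γ.SeparatingLeft)
    (hspan : span ℝ (range v) = ⊤) {i : Fin k} (hi : σ i = i) (hvi : v i ≠ 0) :
    γ (v i) (v i) = 1 ∨ γ (v i) (v i) = -1 := by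
  obtain ⟨s, hs⟩ := hv.apply_self_of_fixed i hi
  cases s
  · refine absurd (hnd _ fun y => ?_) hvi
    have : γ (v i) = 0 := LinearMap.ext_on_range hspan fun j =>
      hv.apply_eq_zero_of_isotropic hi (by simpa using hs) j
    rw [this, LinearMap.zero_apply]
  · exact Or.inr (by simpa using hs)
  · exact Or.inl (by simpa using hs)

end IsWittFamily

theorem exists_isWittFamily_flagSpan_eq (hγ : γ.IsSymm) {k : ℕ} (w : Fin k → V) :
    ∃ (u : Fin k → V) (σ : Fin k → Fin k),
      IsWittFamily γ u σ ∧ ∀ m, flagSpan ℝ u m = flagSpan ℝ w m := by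
  induction k with
  | zero => exact ⟨w, id, ⟨fun _ => rfl, finZeroElim, finZeroElim, finZeroElim, finZeroElim⟩,
      fun _ => rfl⟩
  | succ k ih =>
    obtain ⟨u, σ, hu, huw⟩ := ih (Fin.init w)
    obtain ⟨u', τ, hu', hu'u⟩ := hu.exists_snoc hγ (w (Fin.last k))
    refine ⟨u', τ, hu', fun m => ?_⟩
    rw [hu'u, flagSpan_snoc_eq_of_sub_smul_mem huw (x := w (Fin.last k)) (c := 1) one_ne_zero
      (by simp), Fin.snoc_init_self]

end Witt

theorem stmt_8 {V : Type*} [AddCommGroup V] [Module ℝ V] [FiniteDimensional ℝ V] (n : ℕ)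
    (hdimV : finrank ℝ V = n)
    (W : ℕ → Submodule ℝ V)
    (hW0 : W 0 = ⊥) (hWn : W n = ⊤)
    (hmono : ∀ k l, k ≤ l → l ≤ n → W k ≤ W l)
    (hdim : ∀ k ≤ n, finrank ℝ (W k) = k)
    (γ : V →ₗ[ℝ] V →ₗ[ℝ] ℝ)
    (hsymm : ∀ x y, γ x y = γ y x)
    (hnd : ∀ x, (∀ y, γ x y = 0) → x = 0) :
    ∃ (v : Basis (Fin n) ℝ V) (σ : Fin n → Fin n),
      (∀ i, σ (σ i) = i) ∧
      (∀ k ≤ n, W k = Submodule.span ℝ (⇑v '' {i : Fin n | (i : ℕ) < k})) ∧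
      (∀ i j : Fin n, j ≠ i → j ≠ σ i → γ (v i) (v j) = 0) ∧
      (∀ i, σ i = i → γ (v i) (v i) = 1 ∨ γ (v i) (v i) = -1) ∧
      (∀ i, σ i ≠ i → γ (v i) (v i) = 0 ∧ γ (v i) (v (σ i)) = 1) := by
  obtain ⟨w, hw⟩ := exists_flagSpan_eq n W hW0 hmono hdim
  obtain ⟨u, σ, hu, huw⟩ := exists_isWittFamily_flagSpan_eq (γ := γ) ⟨hsymm⟩ w
  have hspan : span ℝ (range u) = ⊤ := by
    rw [← flagSpan_of_le u le_rfl, huw, hw n le_rfl, hWn]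
  let b := basisOfTopLeSpanOfCardEqFinrank u hspan.ge (by simp [hdimV])
  have hb : ⇑b = u := coe_basisOfTopLeSpanOfCardEqFinrank _ _ _
  refine ⟨b, σ, hu.involutive, fun k hk => ?_, ?_, fun i hi => ?_, fun i hi => ?_⟩ <;> rw [hb]
  · exact ((huw k).trans (hw k hk)).symm
  · exact hu.apply_eq_zero
  · exact hu.apply_self_eq_one_or_neg_one hnd hspan hi (hb ▸ b.ne_zero i)
  · exact ⟨hu.apply_self_of_ne i hi, hu.apply_partner i hi⟩
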